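/- arXiv:2209.10424 — 2 statements merged into one kernel-verified Lean document; each statement's English description precedes it below -/
import Mathlib

section
/- For every 0<β<1, 0≤λ≤1 and z0 in the unit disk D, the set V(z0,λ,β) = {log f'(z0) : f ∈ F(λ,β)} is a convex subset of ℂ. In fact, for f1, f2 ∈ F(λ,β) and 0≤t≤1, the function f_t(z)=∫_0^z exp((1-t) log f1'(ξ) + t log f2'(ξ)) dξ belongs to F(λ,β) and log f_t'(z0) = (1-t) log f1'(z0) + t log f2'(z0). -/
open Complex Set MeasureTheory

noncomputable section

/-- The open unit disk in the complex plane. -/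
def unitDisk : Set ℂ := {z : ℂ | ‖z‖ < 1}

/-- Integral of `g` along the segment from `0` to `z0`:
`∫_0^{z0} g(ξ) dξ = ∫_0^1 z0 · g(t z0) dt`. -/
def segInt (g : ℂ → ℂ) (z0 : ℂ) : ℂ :=
  ∫ t in (0:ℝ)..1, z0 * g ((t : ℂ) * z0)

/-- The branch of `log f'` vanishing at the origin, evaluated at `z0`:
`log f'(z0) = ∫_0^{z0} f''(ξ)/f'(ξ) dξ`. -/
def logDerivAt (f : ℂ → ℂ) (z0 : ℂ) : ℂ :=
  segInt (fun ξ => deriv (deriv f) ξ / deriv f ξ) z0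

/-- The class `F(λ,β)`: analytic `f` on the unit disk with `f(0)=0`, `f'(0)=1`,
`f''(0)=2λ(1-β)`, nonvanishing derivative, and `Re(1 + z f''(z)/f'(z)) > β`. -/
def IsInF (lam beta : ℝ) (f : ℂ → ℂ) : Prop :=
  DifferentiableOn ℂ f unitDisk ∧ f 0 = 0 ∧ deriv f 0 = 1 ∧
    deriv (deriv f) 0 = 2 * (lam : ℂ) * (1 - (beta : ℂ)) ∧
    (∀ z ∈ unitDisk, deriv f z ≠ 0) ∧
    (∀ z ∈ unitDisk, beta < (1 + z * deriv (deriv f) z / deriv f z).re)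

/-- The region of variability `V(z0,λ,β) = {log f'(z0) : f ∈ F(λ,β)}`. -/
def V (z0 : ℂ) (lam beta : ℝ) : Set ℂ :=
  {w : ℂ | ∃ f : ℂ → ℂ, IsInF lam beta f ∧ logDerivAt f z0 = w}

/-!
Writing `φ = log f'`, membership of `f` in `F(λ,β)` becomes a set of conditions on the holomorphic
function `φ` alone: `φ(0) = 0`, `φ'(0) = 2λ(1-β)` and `Re(1 + z φ'(z)) > β`, with `f` recovered as
`∫₀^z exp φ`. These conditions are preserved by convex combinations of `φ`, the last one because
it says that `φ'(z)` lies in a half-plane. That `∫₀^z exp φ` really has derivative `exp φ` rests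
on the existence of primitives of holomorphic functions on a disk.
-/

open Metric

lemma unitDisk_eq_ball : unitDisk = ball 0 1 := by
  ext z
  simp [unitDisk]

lemma isOpen_unitDisk : IsOpen unitDisk :=
  unitDisk_eq_ball ▸ isOpen_ball

lemma zero_mem_unitDisk : (0 : ℂ) ∈ unitDisk := by
  simp [unitDisk]

lemma starConvex_unitDisk : StarConvex ℝ 0 unitDisk :=
  unitDisk_eq_ball ▸ (convex_ball 0 1).starConvex (mem_ball_self one_pos)

lemma segInt_zero (g : ℂ → ℂ) : segInt g 0 = 0 := by
  simp [segInt]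

lemma segInt_eq_sub_of_hasDerivAt {U : Set ℂ} (hU : StarConvex ℝ 0 U) {F g : ℂ → ℂ}
    (hF : ∀ w ∈ U, HasDerivAt F (g w) w) (hg : ContinuousOn g U) {z : ℂ} (hz : z ∈ U) :
    segInt g z = F z - F 0 := by
  have hseg : ∀ t ∈ uIcc (0 : ℝ) 1, (t : ℂ) * z ∈ U := fun t ht => by
    rw [uIcc_of_le zero_le_one] at ht
    simpa [Complex.real_smul] using hU.smul_mem hz ht.1 ht.2
  have hderiv : ∀ t ∈ uIcc (0 : ℝ) 1,
      HasDerivAt (fun s : ℝ => F (s * z)) (z * g (t * z)) t := fun t ht => by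
    rw [mul_comm]
    exact ((hF _ (hseg t ht)).comp (t : ℂ) (hasDerivAt_mul_const z)).comp_ofReal
  have hint : IntervalIntegrable (fun t : ℝ => z * g (t * z)) volume 0 1 :=
    (continuousOn_const.mul (hg.comp (by fun_prop) hseg)).intervalIntegrable
  simpa [segInt] using intervalIntegral.integral_eq_sub_of_hasDerivAt hderiv hint

lemma hasDerivAt_segInt {g : ℂ → ℂ} (hg : DifferentiableOn ℂ g unitDisk) {z : ℂ}
    (hz : z ∈ unitDisk) : HasDerivAt (segInt g) (g z) z := by
  rw [unitDisk_eq_ball] at hg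
  obtain ⟨F, hF⟩ := hg.isExactOn_ball
  rw [← unitDisk_eq_ball] at hF hg
  have hprim : segInt g =ᶠ[nhds z] fun w => F w - F 0 :=
    Filter.eventuallyEq_of_mem (isOpen_unitDisk.mem_nhds hz) fun w hw =>
      segInt_eq_sub_of_hasDerivAt starConvex_unitDisk hF hg.continuousOn hw
  exact ((hF z hz).sub_const (F 0)).congr_of_eventuallyEq hprim

lemma differentiableOn_logDeriv {U : Set ℂ} (hU : IsOpen U) {f : ℂ → ℂ}
    (hf : DifferentiableOn ℂ f U) (hf' : ∀ z ∈ U, deriv f z ≠ 0) :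
    DifferentiableOn ℂ (fun ξ => deriv (deriv f) ξ / deriv f ξ) U :=
  have hA := hf.analyticOnNhd hU
  hA.deriv.deriv.differentiableOn.div hA.deriv.differentiableOn hf'

lemma hasDerivAt_logDerivAt {f : ℂ → ℂ} (hf : DifferentiableOn ℂ f unitDisk)
    (hf' : ∀ z ∈ unitDisk, deriv f z ≠ 0) {z : ℂ} (hz : z ∈ unitDisk) :
    HasDerivAt (logDerivAt f) (deriv (deriv f) z / deriv f z) z :=
  hasDerivAt_segInt (differentiableOn_logDeriv isOpen_unitDisk hf hf') hz

section ExpPrimitive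

variable {φ : ℂ → ℂ}

lemma deriv_segInt_exp (hφ : DifferentiableOn ℂ φ unitDisk) {z : ℂ} (hz : z ∈ unitDisk) :
    deriv (segInt fun ξ => exp (φ ξ)) z = exp (φ z) :=
  (hasDerivAt_segInt hφ.cexp hz).deriv

lemma deriv_deriv_segInt_exp (hφ : DifferentiableOn ℂ φ unitDisk) {z : ℂ} (hz : z ∈ unitDisk) :
    deriv (deriv (segInt fun ξ => exp (φ ξ))) z = exp (φ z) * deriv φ z := by
  have hderiv : deriv (segInt fun ξ => exp (φ ξ)) =ᶠ[nhds z] fun ξ => exp (φ ξ) :=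
    Filter.eventuallyEq_of_mem (isOpen_unitDisk.mem_nhds hz) fun w hw =>
      deriv_segInt_exp hφ hw
  rw [hderiv.deriv_eq]
  exact ((hφ.differentiableAt (isOpen_unitDisk.mem_nhds hz)).hasDerivAt.cexp).deriv

lemma logDeriv_segInt_exp (hφ : DifferentiableOn ℂ φ unitDisk) {z : ℂ} (hz : z ∈ unitDisk) :
    deriv (deriv (segInt fun ξ => exp (φ ξ))) z / deriv (segInt fun ξ => exp (φ ξ)) z =
      deriv φ z := by
  rw [deriv_deriv_segInt_exp hφ hz, deriv_segInt_exp hφ hz,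
    mul_div_cancel_left₀ _ (exp_ne_zero _)]

lemma logDerivAt_segInt_exp (hφ : DifferentiableOn ℂ φ unitDisk) (hφ0 : φ 0 = 0) {z : ℂ}
    (hz : z ∈ unitDisk) :
    logDerivAt (segInt fun ξ => exp (φ ξ)) z = φ z := by
  have hcongr := fun w (hw : w ∈ unitDisk) => logDeriv_segInt_exp hφ hw
  have hcont := (hφ.analyticOnNhd isOpen_unitDisk).deriv.continuousOn.congr hcongr
  rw [logDerivAt, segInt_eq_sub_of_hasDerivAt starConvex_unitDisk (F := φ)
    (fun w hw => hcongr w hw ▸ (hφ.differentiableAt (isOpen_unitDisk.mem_nhds hw)).hasDerivAt)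
    hcont hz, hφ0, sub_zero]

lemma isInF_segInt_exp {lam beta : ℝ} (hφ : DifferentiableOn ℂ φ unitDisk) (hφ0 : φ 0 = 0)
    (hφ'0 : deriv φ 0 = 2 * (lam : ℂ) * (1 - (beta : ℂ)))
    (hre : ∀ z ∈ unitDisk, beta < (1 + z * deriv φ z).re) :
    IsInF lam beta (segInt fun ξ => exp (φ ξ)) := by
  refine ⟨fun z hz => (hasDerivAt_segInt hφ.cexp hz).differentiableAt.differentiableWithinAt,
    segInt_zero _, ?_, ?_, fun z hz => ?_, fun z hz => ?_⟩
  · rw [deriv_segInt_exp hφ zero_mem_unitDisk, hφ0, exp_zero]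
  · rw [deriv_deriv_segInt_exp hφ zero_mem_unitDisk, hφ0, exp_zero, one_mul, hφ'0]
  · exact deriv_segInt_exp hφ hz ▸ exp_ne_zero _
  · rw [mul_div_assoc, logDeriv_segInt_exp hφ hz]
    exact hre z hz

end ExpPrimitive

section Interpolation

variable {lam beta : ℝ} {f1 f2 : ℂ → ℂ} {t : ℝ}

lemma hasDerivAt_logDerivAt_combo (hf1 : IsInF lam beta f1) (hf2 : IsInF lam beta f2)
    {z : ℂ} (hz : z ∈ unitDisk) :
    HasDerivAt (fun ξ => (1 - (t : ℂ)) * logDerivAt f1 ξ + (t : ℂ) * logDerivAt f2 ξ)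
      ((1 - (t : ℂ)) * (deriv (deriv f1) z / deriv f1 z) +
        (t : ℂ) * (deriv (deriv f2) z / deriv f2 z)) z :=
  ((hasDerivAt_logDerivAt hf1.1 hf1.2.2.2.2.1 hz).const_mul _).add
    ((hasDerivAt_logDerivAt hf2.1 hf2.2.2.2.2.1 hz).const_mul _)

lemma differentiableOn_logDerivAt_combo (hf1 : IsInF lam beta f1) (hf2 : IsInF lam beta f2) :
    DifferentiableOn ℂ
      (fun ξ => (1 - (t : ℂ)) * logDerivAt f1 ξ + (t : ℂ) * logDerivAt f2 ξ) unitDisk :=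
  fun _ hz => (hasDerivAt_logDerivAt_combo hf1 hf2 hz).differentiableAt.differentiableWithinAt

lemma isInF_segInt_exp_combo (hf1 : IsInF lam beta f1) (hf2 : IsInF lam beta f2)
    (ht0 : 0 ≤ t) (ht1 : t ≤ 1) :
    IsInF lam beta (segInt fun ξ =>
      exp ((1 - (t : ℂ)) * logDerivAt f1 ξ + (t : ℂ) * logDerivAt f2 ξ)) := by
  have hderiv := fun z (hz : z ∈ unitDisk) =>
    (hasDerivAt_logDerivAt_combo (t := t) hf1 hf2 hz).deriv
  refine isInF_segInt_exp (differentiableOn_logDerivAt_combo hf1 hf2)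
    (by simp [logDerivAt, segInt_zero]) ?_ fun z hz => ?_
  · rw [hderiv 0 zero_mem_unitDisk, hf1.2.2.1, hf1.2.2.2.1, hf2.2.2.1, hf2.2.2.2.1]
    ring
  · have hcombo : 1 + z * ((1 - (t : ℂ)) * (deriv (deriv f1) z / deriv f1 z) +
          (t : ℂ) * (deriv (deriv f2) z / deriv f2 z)) =
        (1 - t) • (1 + z * deriv (deriv f1) z / deriv f1 z) +
          t • (1 + z * deriv (deriv f2) z / deriv f2 z) := by
      simp only [Complex.real_smul]
      push_cast
      ring
    rw [hderiv z hz, hcombo]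
    exact convex_halfSpace_re_gt _ (hf1.2.2.2.2.2 z hz) (hf2.2.2.2.2.2 z hz) (by linarith) ht0
      (by ring)

lemma logDerivAt_segInt_exp_combo (hf1 : IsInF lam beta f1) (hf2 : IsInF lam beta f2)
    {z : ℂ} (hz : z ∈ unitDisk) :
    logDerivAt (segInt fun ξ =>
        exp ((1 - (t : ℂ)) * logDerivAt f1 ξ + (t : ℂ) * logDerivAt f2 ξ)) z =
      (1 - (t : ℂ)) * logDerivAt f1 z + (t : ℂ) * logDerivAt f2 z :=
  logDerivAt_segInt_exp (differentiableOn_logDerivAt_combo hf1 hf2)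
    (by simp [logDerivAt, segInt_zero]) hz

end Interpolation

theorem V_isConvex_general (beta lam : ℝ) (z0 : ℂ) (hz0 : z0 ∈ unitDisk) :
    Convex ℝ (V z0 lam beta) ∧
      ∀ f1 f2 : ℂ → ℂ, IsInF lam beta f1 → IsInF lam beta f2 →
        ∀ t : ℝ, 0 ≤ t → t ≤ 1 →
          IsInF lam beta
            (fun z => segInt (fun ξ =>
              Complex.exp ((1 - (t : ℂ)) * logDerivAt f1 ξ + (t : ℂ) * logDerivAt f2 ξ)) z) ∧
          logDerivAt
            (fun z => segInt (fun ξ =>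
              Complex.exp ((1 - (t : ℂ)) * logDerivAt f1 ξ + (t : ℂ) * logDerivAt f2 ξ)) z) z0
            = (1 - (t : ℂ)) * logDerivAt f1 z0 + (t : ℂ) * logDerivAt f2 z0 := by
  refine ⟨?_, fun f1 f2 hf1 hf2 t ht0 ht1 =>
    ⟨isInF_segInt_exp_combo hf1 hf2 ht0 ht1, logDerivAt_segInt_exp_combo hf1 hf2 hz0⟩⟩
  rintro _ ⟨f1, hf1, rfl⟩ _ ⟨f2, hf2, rfl⟩ a b ha hb hab
  obtain rfl : a = 1 - b := by linarith
  refine ⟨_, isInF_segInt_exp_combo hf1 hf2 hb (by linarith), ?_⟩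
  rw [logDerivAt_segInt_exp_combo hf1 hf2 hz0]
  simp [Complex.real_smul]

/-- `V(z0,λ,β)` is convex; in fact for `f1, f2 ∈ F(λ,β)` and `0 ≤ t ≤ 1`,
the function `f_t(z) = ∫_0^z exp((1-t) log f1'(ξ) + t log f2'(ξ)) dξ` belongs to
`F(λ,β)` and `log f_t'(z0) = (1-t) log f1'(z0) + t log f2'(z0)`. -/
theorem V_isConvex (beta lam : ℝ) (hbeta : 0 < beta ∧ beta < 1)
    (hlam : 0 ≤ lam ∧ lam ≤ 1) (z0 : ℂ) (hz0 : z0 ∈ unitDisk) :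
    Convex ℝ (V z0 lam beta) ∧
      ∀ f1 f2 : ℂ → ℂ, IsInF lam beta f1 → IsInF lam beta f2 →
        ∀ t : ℝ, 0 ≤ t → t ≤ 1 →
          IsInF lam beta
            (fun z => segInt (fun ξ =>
              Complex.exp ((1 - (t : ℂ)) * logDerivAt f1 ξ + (t : ℂ) * logDerivAt f2 ξ)) z) ∧
          logDerivAt
            (fun z => segInt (fun ξ =>
              Complex.exp ((1 - (t : ℂ)) * logDerivAt f1 ξ + (t : ℂ) * logDerivAt f2 ξ)) z) z0
            = (1 - (t : ℂ)) * logDerivAt f1 z0 + (t : ℂ) * logDerivAt f2 z0 :=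
  V_isConvex_general beta lam z0 hz0
end
end

section
/- Let 0<β<1 and let f ∈ F(0,β), i.e. f is analytic on D with f(0)=0, f'(0)=1, f''(0)=0, f' nonvanishing on D, and Re(1+z f''(z)/f'(z))>β on D. Then the pre-Schwarzian norm of f satisfies ‖f‖ = sup_{z∈D} (1-|z|²)|f''(z)/f'(z)| ≤ 2(1-β). In fact, for every z∈D one has |f''(z)/f'(z)| ≤ 2(1-β)|z|/(1-|z|²). -/
/-!
Put `g(z) = z f''(z)/f'(z)` and `c = 1 - β`. The hypothesis says `Re g > -c`, and `f''(0) = 0`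
makes `g` vanish to second order at `0`. The Möbius map `w ↦ w / (w + 2c)` sends the half-plane
`Re w > -c` into the unit disk, so `ω = g / (g + 2c)` maps the disk into itself with a double zero
at `0`, and the Schwarz lemma gives `|ω(z)| ≤ |z|²`. Inverting, `g = 2cω / (1 - ω)`, hence
`|g(z)| ≤ 2c|z|² / (1 - |z|²)`; dividing by `|z|` gives the pointwise bound, and
`|z| < 1` gives the bound on the norm.
-/

open Complex Set MeasureTheory

noncomputable section

open Metric Filter Topology

lemma one_sub_sq_norm_pos {z : ℂ} (hz : z ∈ ball (0 : ℂ) 1) : 0 < 1 - ‖z‖ ^ 2 :=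
  sub_pos.2 (pow_lt_one₀ (norm_nonneg z) (mem_ball_zero_iff.1 hz) two_ne_zero)

lemma norm_le_sq_of_mapsTo_ball {E : Type*} [NormedAddCommGroup E] [NormedSpace ℂ E]
    {ω : ℂ → E} {z : ℂ} (hd : DifferentiableOn ℂ ω (ball 0 1))
    (h_maps : MapsTo ω (ball 0 1) (closedBall 0 1)) (h₀ : ω 0 = 0) (h₀' : deriv ω 0 = 0)
    (hz : z ∈ ball 0 1) : ‖ω z‖ ≤ ‖z‖ ^ 2 := by
  have hderiv : HasDerivAt ω 0 0 := h₀' ▸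
    (hd.differentiableAt (isOpen_ball.mem_nhds (mem_ball_self one_pos))).hasDerivAt
  have hlittle : (ω · - ω 0) =o[𝓝 0] (fun w ↦ ‖w - 0‖ ^ 1) := by
    simpa using (hasDerivAt_iff_isLittleO.1 hderiv).norm_right
  have h := Complex.dist_le_mul_div_pow_of_mapsTo_ball_of_isLittleO hd (by rwa [h₀]) hlittle hz
  rwa [h₀, dist_zero_right, dist_zero_right, div_one, one_mul] at h

lemma norm_lt_norm_add_two_mul {c : ℝ} {w : ℂ} (hc : 0 < c) (hw : -c < w.re) :
    ‖w‖ < ‖w + 2 * c‖ := by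
  have hsq : ‖w‖ ^ 2 < ‖w + 2 * c‖ ^ 2 := by
    simp only [Complex.sq_norm, Complex.normSq_apply, Complex.add_re, Complex.add_im,
      Complex.mul_re, Complex.mul_im, Complex.ofReal_re, Complex.ofReal_im,
      Complex.re_ofNat, Complex.im_ofNat]
    nlinarith
  exact lt_of_pow_lt_pow_left₀ 2 (norm_nonneg _) hsq

lemma norm_le_of_norm_div_add_two_mul_le {c t : ℝ} {w : ℂ} (hc : 0 < c) (hw : w + 2 * c ≠ 0)
    (hωt : ‖w / (w + 2 * c)‖ ≤ t) (ht : t < 1) : ‖w‖ ≤ 2 * c * t / (1 - t) := by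
  set ω := w / (w + 2 * c)
  have hinv : w * (1 - ω) = 2 * c * ω := by
    simp only [ω]; field_simp; ring
  have hnorm : ‖w‖ * ‖1 - ω‖ = 2 * c * ‖ω‖ := by
    simpa [abs_of_pos hc] using congrArg norm hinv
  have hlow : 1 - t ≤ ‖1 - ω‖ := by
    have := norm_sub_norm_le (1 : ℂ) ω
    rw [norm_one] at this
    linarith
  rw [le_div_iff₀ (sub_pos.2 ht)]
  calc ‖w‖ * (1 - t) ≤ ‖w‖ * ‖1 - ω‖ := by gcongr
    _ = 2 * c * ‖ω‖ := hnorm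
    _ ≤ 2 * c * t := by gcongr

lemma norm_le_of_forall_neg_lt_re {g : ℂ → ℂ} {c : ℝ} {z : ℂ} (hc : 0 < c)
    (hd : DifferentiableOn ℂ g (ball 0 1)) (hre : ∀ w ∈ ball (0 : ℂ) 1, -c < (g w).re)
    (h₀ : g 0 = 0) (h₀' : deriv g 0 = 0) (hz : z ∈ ball 0 1) :
    ‖g z‖ ≤ 2 * c * ‖z‖ ^ 2 / (1 - ‖z‖ ^ 2) := by
  have hlt : ∀ w ∈ ball (0 : ℂ) 1, ‖g w‖ < ‖g w + 2 * c‖ := fun w hw ↦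
    norm_lt_norm_add_two_mul hc (hre w hw)
  have hden : ∀ w ∈ ball (0 : ℂ) 1, g w + 2 * c ≠ 0 := fun w hw ↦
    norm_pos_iff.1 ((norm_nonneg _).trans_lt (hlt w hw))
  set ω : ℂ → ℂ := fun w ↦ g w / (g w + 2 * c)
  have hωd : DifferentiableOn ℂ ω (ball 0 1) := hd.div (hd.add_const _) hden
  have hmaps : MapsTo ω (ball 0 1) (closedBall 0 1) := fun w hw ↦ by
    rw [mem_closedBall_zero_iff, norm_div]
    exact (div_lt_one ((norm_nonneg _).trans_lt (hlt w hw))).2 (hlt w hw) |>.le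
  have h0 : (0 : ℂ) ∈ ball (0 : ℂ) 1 := mem_ball_self one_pos
  have hg0 : DifferentiableAt ℂ g 0 := hd.differentiableAt (isOpen_ball.mem_nhds h0)
  have hω₀' : deriv ω 0 = 0 := by
    rw [deriv_fun_div hg0 (hg0.add_const _) (hden 0 h0)]
    simp [h₀, h₀']
  have hωz := norm_le_sq_of_mapsTo_ball hωd hmaps (by simp [ω, h₀]) hω₀' hz
  exact norm_le_of_norm_div_add_two_mul_le hc (hden z hz) hωz
    (sub_pos.1 (one_sub_sq_norm_pos hz))

lemma norm_deriv_deriv_div_deriv_le {f : ℂ → ℂ} {β : ℝ} {z : ℂ} (hβ : β < 1)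
    (hd : DifferentiableOn ℂ f (ball 0 1)) (hf'' : deriv (deriv f) 0 = 0)
    (hf' : ∀ w ∈ ball (0 : ℂ) 1, deriv f w ≠ 0)
    (hre : ∀ w ∈ ball (0 : ℂ) 1, β < (1 + w * deriv (deriv f) w / deriv f w).re)
    (hz : z ∈ ball 0 1) :
    ‖deriv (deriv f) z / deriv f z‖ ≤ 2 * (1 - β) * ‖z‖ / (1 - ‖z‖ ^ 2) := by
  set q : ℂ → ℂ := fun w ↦ deriv (deriv f) w / deriv f w
  have han : AnalyticOnNhd ℂ f (ball 0 1) := hd.analyticOnNhd isOpen_ball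
  have hq : DifferentiableOn ℂ q (ball 0 1) :=
    han.deriv.deriv.differentiableOn.div han.deriv.differentiableOn hf'
  have hq0 : q 0 = 0 := by simp [q, hf'']
  have hg' : deriv (fun w ↦ w * q w) 0 = 0 := by
    rw [deriv_fun_mul (c := fun w ↦ w) differentiableAt_id
      (hq.differentiableAt (isOpen_ball.mem_nhds (mem_ball_self one_pos)))]
    simp [hq0]
  have hgre : ∀ w ∈ ball (0 : ℂ) 1, -(1 - β) < (w * q w).re := fun w hw ↦ by
    have := hre w hw
    rw [mul_div_assoc, add_re, one_re] at this
    linarith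
  have hg := norm_le_of_forall_neg_lt_re (g := fun w ↦ w * q w) (sub_pos.2 hβ)
    (differentiableOn_id.mul hq) hgre (zero_mul _) hg' hz
  rcases eq_or_ne z 0 with rfl | hz0
  · simp [hf'']
  · rw [norm_mul, le_div_iff₀ (one_sub_sq_norm_pos hz)] at hg
    rw [le_div_iff₀ (one_sub_sq_norm_pos hz)]
    refine le_of_mul_le_mul_left ?_ (norm_pos_iff.2 hz0)
    linarith

/-- for `f ∈ F(0,β)` the pre-Schwarzian norm satisfies
`‖f‖ = sup_{z ∈ D} (1-|z|²)|f''(z)/f'(z)| ≤ 2(1-β)`; in fact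
`|f''(z)/f'(z)| ≤ 2(1-β)|z|/(1-|z|²)` for every `z ∈ D`. -/
theorem preSchwarzian_norm_le (beta : ℝ) (hbeta : 0 < beta ∧ beta < 1)
    (f : ℂ → ℂ) (hf : IsInF 0 beta f) :
    (∀ z ∈ unitDisk,
      ‖deriv (deriv f) z / deriv f z‖
        ≤ 2 * (1 - beta) * ‖z‖ / (1 - ‖z‖ ^ 2)) ∧
    sSup ((fun z => (1 - ‖z‖ ^ 2) *
        ‖deriv (deriv f) z / deriv f z‖) '' unitDisk)
      ≤ 2 * (1 - beta) := by
  obtain ⟨hd, -, -, hf'', hf', hre⟩ := hf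
  have hdisk : unitDisk = ball 0 1 := by ext; simp [unitDisk]
  rw [hdisk] at hd hf' hre ⊢
  have hbound : ∀ z ∈ ball (0 : ℂ) 1, ‖deriv (deriv f) z / deriv f z‖
      ≤ 2 * (1 - beta) * ‖z‖ / (1 - ‖z‖ ^ 2) := fun z hz ↦
    norm_deriv_deriv_div_deriv_le hbeta.2 hd (by simpa using hf'') hf' hre hz
  refine ⟨hbound, Real.sSup_le ?_ (by linarith [hbeta.2])⟩
  rintro _ ⟨z, hz, rfl⟩
  calc (1 - ‖z‖ ^ 2) * ‖deriv (deriv f) z / deriv f z‖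
      ≤ 2 * (1 - beta) * ‖z‖ := by
        rw [mul_comm, ← le_div_iff₀ (one_sub_sq_norm_pos hz)]
        exact hbound z hz
    _ ≤ 2 * (1 - beta) :=
        mul_le_of_le_one_right (by linarith [hbeta.2]) (mem_ball_zero_iff.1 hz).le
end
end
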